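/- arXiv:2604.25868 — 5 statements merged into one kernel-verified Lean document; each statement's English description precedes it below -/
import Mathlib

section
/- Let Φ be a locally finite set of points in the Euclidean plane ℝ² and let σ, ρ, ν ≥ 0. Then Φ is (σ,ρ,ν)-ring regulated about the origin if and only if Φ is (σ,ρ,ν)-shot-noise ring regulated about the origin. -/
/-!
Write `g(b) = ρ (b - r) + ν (b² - r²) = ∫_r^b (ρ + 2νs) ds`. Ring regulation puts at most
`σ + g(b)` points at radius in `(r, b)`, hence, by right continuity, at most `σ + g(t)` at radius
in `(r, t]`. The shot-noise bound follows by an Abel summation, done as an induction that peels off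
an innermost point, of radius `t`: the remaining points satisfy the same counting bound about the
base radius `t` with `σ` replaced by `σ + g(t) - 1 ≥ 0`, and since `f` is non-increasing,
`(σ + g(t)) f(t) ≤ σ f(r) + ∫_r^t (ρ + 2νs) f(s) ds`.
Conversely, the test function `f = 𝟙_{[0,R)}` turns the shot-noise bound into the ring bound.
-/

open MeasureTheory Set

noncomputable section

abbrev Plane : Type := EuclideanSpace ℝ (Fin 2)

/-- `Φ` is `(σ,ρ,ν)`-ring regulated about the origin: the number of points of `Φ` in any
open annulus `{z : r < ‖z‖ < R}` is at most `σ + ρ(R-r) + ν(R²-r²)`. -/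
def RingRegulated (Φ : Set Plane) (σ ρ ν : ℝ) : Prop :=
  ∀ r R : ℝ, 0 ≤ r → r < R →
    ((Φ ∩ {z : Plane | r < ‖z‖ ∧ ‖z‖ < R}).ncard : ℝ)
      ≤ σ + ρ * (R - r) + ν * (R ^ 2 - r ^ 2)

/-- `Φ` is `(σ,ρ,ν)`-shot-noise ring regulated about the origin: for every bounded,
non-increasing, nonnegative function `f` on `[0,∞)` with `∫₀^∞ r f(r) dr < ∞`, and all
`0 ≤ r < R`, the shot noise `Σ_{x ∈ Φ, r < ‖x‖ < R} f(‖x‖)` is at most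
`σ f(r) + ρ ∫_r^R f + 2ν ∫_r^R s f(s) ds`. -/
def ShotNoiseRingRegulated (Φ : Set Plane) (σ ρ ν : ℝ) : Prop :=
  ∀ f : ℝ → ℝ,
    (∀ x, 0 ≤ f x) →
    AntitoneOn f (Set.Ici 0) →
    BddAbove (f '' Set.Ici 0) →
    IntegrableOn (fun s => s * f s) (Set.Ioi 0) →
    ∀ r R : ℝ, 0 ≤ r → r < R →
      (∑' x : (Φ ∩ {z : Plane | r < ‖z‖ ∧ ‖z‖ < R} : Set Plane), f ‖(x : Plane)‖)
        ≤ σ * f r + ρ * (∫ s in Set.Ioc r R, f s) + 2 * ν * (∫ s in Set.Ioc r R, s * f s)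

lemma Set.Finite.tsum_subtype_eq_sum {α β : Type*} [AddCommMonoid β] [TopologicalSpace β]
    {s : Set α} (hs : s.Finite) (g : α → β) :
    ∑' x : s, g x = ∑ x ∈ hs.toFinset, g x := by
  rw [← Finset.tsum_subtype', hs.coe_toFinset]

section Antitone

variable {f w : ℝ → ℝ} {a b : ℝ}

lemma AntitoneOn.intervalIntegrable_of_Ici (hf : AntitoneOn f (Ici a)) (hab : a ≤ b) :
    IntervalIntegrable f volume a b :=
  (hf.mono (by simp [uIcc_of_le hab, Icc_subset_Ici_self])).intervalIntegrable

lemma AntitoneOn.intervalIntegrable_mul_of_continuous (hf : AntitoneOn f (Ici a))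
    (hw : Continuous w) (hab : a ≤ b) : IntervalIntegrable (fun s => w s * f s) volume a b :=
  (hf.intervalIntegrable_of_Ici hab).continuousOn_mul hw.continuousOn

lemma AntitoneOn.integral_mul_le (hf : AntitoneOn f (Ici a)) (hw : Continuous w)
    (hw0 : ∀ s ≥ a, 0 ≤ w s) (hab : a ≤ b) :
    (∫ s in a..b, w s) * f b ≤ ∫ s in a..b, w s * f s := by
  rw [← intervalIntegral.integral_mul_const]
  refine intervalIntegral.integral_mono_on hab (hw.intervalIntegrable a b |>.mul_const _)
    (hf.intervalIntegrable_mul_of_continuous hw hab) fun s hs => ?_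
  exact mul_le_mul_of_nonneg_left (hf hs.1 (hs.1.trans hs.2) hs.2) (hw0 s hs.1)

end Antitone

open Finset in
lemma sum_le_of_card_filter_lt_le {ι : Type*} (t : ι → ℝ) {f w : ℝ → ℝ} (hw : Continuous w)
    {R : ℝ} (A : Finset ι) {r c : ℝ} (hrR : r ≤ R) (hc : 0 ≤ c) (hf : AntitoneOn f (Ici r))
    (hf0 : ∀ s ≥ r, 0 ≤ f s) (hw0 : ∀ s ≥ r, 0 ≤ w s) (hA : ∀ i ∈ A, t i ∈ Icc r R)
    (hcount : ∀ b > r, (#{i ∈ A | t i < b} : ℝ) ≤ c + ∫ s in r..b, w s) :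
    ∑ i ∈ A, f (t i) ≤ c * f r + ∫ s in r..R, w s * f s := by
  classical
  induction A using Finset.induction_on_min_value t generalizing r c with
  | empty =>
    rw [sum_empty]
    exact add_nonneg (mul_nonneg hc (hf0 r le_rfl)) <|
      intervalIntegral.integral_nonneg hrR fun s hs => mul_nonneg (hw0 s hs.1) (hf0 s hs.1)
  | insert a A ha hmin ih =>
    obtain ⟨hra, haR⟩ := hA a (mem_insert_self a A)
    have hf' : AntitoneOn f (Ici (t a)) := hf.mono (Ici_subset_Ici.2 hra)
    have hcount' : ∀ b > t a, 1 + (#{i ∈ A | t i < b} : ℝ) ≤ c + ∫ s in r..b, w s := by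
      intro b hb
      have := hcount b (hra.trans_lt hb)
      rwa [filter_insert, if_pos hb, card_insert_of_notMem fun h => ha (mem_filter.1 h).1,
        Nat.cast_succ, add_comm] at this
    -- the mass up to `t a` is at least the point `a` itself, by right continuity of the bound
    have hone : 1 ≤ c + ∫ s in r..t a, w s := by
      have hprim : Continuous fun b => c + ∫ s in r..b, w s :=
        continuous_const.add (intervalIntegral.continuous_primitive hw.intervalIntegrable r)
      exact ge_of_tendsto (hprim.tendsto (t a) |>.mono_left nhdsWithin_le_nhds)
        (eventually_nhdsWithin_of_forall (s := Ioi (t a)) fun b hb =>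
          le_of_add_le_of_nonneg_left (hcount' b hb) (Nat.cast_nonneg _))
    have hsumA := ih haR (by linarith : 0 ≤ c + (∫ s in r..t a, w s) - 1) hf'
      (fun s hs => hf0 s (hra.trans hs)) (fun s hs => hw0 s (hra.trans hs))
      (fun i hi => ⟨hmin i hi, (hA i (mem_insert_of_mem hi)).2⟩) fun b hb => by
        have := hcount' b hb
        rw [← intervalIntegral.integral_add_adjacent_intervals (hw.intervalIntegrable r (t a))
          (hw.intervalIntegrable (t a) b)] at this
        linarith
    have hmass := hf.integral_mul_le hw hw0 hra
    have hcr : c * f (t a) ≤ c * f r := mul_le_mul_of_nonneg_left (hf self_mem_Ici hra hra) hc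
    rw [sum_insert ha, ← intervalIntegral.integral_add_adjacent_intervals
      (hf.intervalIntegrable_mul_of_continuous hw hra)
      (hf'.intervalIntegrable_mul_of_continuous hw haR)]
    linarith

lemma integral_const_add_two_mul (ρ ν r b : ℝ) :
    ∫ s in r..b, (ρ + 2 * ν * s) = ρ * (b - r) + ν * (b ^ 2 - r ^ 2) := by
  rw [intervalIntegral.integral_add (f := fun _ => ρ) (g := fun s => 2 * ν * s)
    intervalIntegrable_const ((continuous_const.mul continuous_id).intervalIntegrable r b),
    intervalIntegral.integral_const, intervalIntegral.integral_const_mul, integral_id, smul_eq_mul]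
  ring

lemma integral_const_add_two_mul_mul {f : ℝ → ℝ} {r R : ℝ} (hrR : r ≤ R)
    (hf : IntervalIntegrable f volume r R) (ρ ν : ℝ) :
    ∫ s in r..R, (ρ + 2 * ν * s) * f s
      = ρ * (∫ s in Ioc r R, f s) + 2 * ν * (∫ s in Ioc r R, s * f s) := by
  have hsf : IntervalIntegrable (fun s => s * f s) volume r R := hf.continuousOn_mul continuousOn_id
  rw [intervalIntegrable_iff_integrableOn_Ioc_of_le hrR] at hf hsf
  rw [intervalIntegral.integral_of_le hrR, ← integral_const_mul, ← integral_const_mul,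
    ← integral_add (hf.const_mul ρ) (hsf.const_mul (2 * ν))]
  congr 1 with s
  ring

lemma setIntegral_Ioc_mul_indicator_Iio {r R : ℝ} (hrR : r ≤ R) (g : ℝ → ℝ) :
    ∫ s in Ioc r R, g s * (Iio R).indicator 1 s = ∫ s in r..R, g s := by
  rw [integral_Ioc_eq_integral_Ioo, setIntegral_congr_fun (g := g) measurableSet_Ioo
    fun s hs => by simp [hs.2], ← integral_Ioc_eq_integral_Ioo,
    intervalIntegral.integral_of_le hrR]

lemma antitone_indicator_Iio_one (R : ℝ) : Antitone ((Iio R).indicator (1 : ℝ → ℝ)) := by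
  intro a b hab
  by_cases hb : b < R
  · simp [hb, hab.trans_lt hb]
  · simp [hb, indicator_nonneg]

lemma integrableOn_Ioi_mul_indicator_Iio {R : ℝ} (hR : 0 ≤ R) :
    IntegrableOn (fun s => s * (Iio R).indicator 1 s) (Ioi 0) := by
  refine IntegrableOn.of_forall_sdiff_eq_zero (s := Ioc 0 R) ?_ measurableSet_Ioi fun s hs => ?_
  · exact (intervalIntegrable_iff_integrableOn_Ioc_of_le hR).1 <|
      ((antitone_indicator_Iio_one R).antitoneOn _).intervalIntegrable_mul_of_continuous
        continuous_id hR
  · simp [not_lt.1 fun h => hs.2 ⟨hs.1, h.le⟩]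

section Plane

variable {Φ : Set Plane} {σ ρ ν : ℝ}

lemma finite_inter_annulus (hloc : ∀ R : ℝ, (Φ ∩ Metric.closedBall 0 R).Finite) (r R : ℝ) :
    (Φ ∩ {z : Plane | r < ‖z‖ ∧ ‖z‖ < R}).Finite :=
  (hloc R).subset fun _ hz => ⟨hz.1, mem_closedBall_zero_iff.2 hz.2.2.le⟩

theorem RingRegulated.shotNoiseRingRegulated (hσ : 0 ≤ σ) (hρ : 0 ≤ ρ) (hν : 0 ≤ ν)
    (hloc : ∀ R : ℝ, (Φ ∩ Metric.closedBall 0 R).Finite) (hΦ : RingRegulated Φ σ ρ ν) :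
    ShotNoiseRingRegulated Φ σ ρ ν := by
  intro f hf0 hf _ _ r R hr hrR
  have hfr : AntitoneOn f (Ici r) := hf.mono (Ici_subset_Ici.2 hr)
  have hS := finite_inter_annulus hloc r R
  rw [hS.tsum_subtype_eq_sum (fun x => f ‖x‖), add_assoc,
    ← integral_const_add_two_mul_mul hrR.le (hfr.intervalIntegrable_of_Ici hrR.le)]
  refine sum_le_of_card_filter_lt_le norm (by fun_prop) _ hrR.le hσ hfr (fun s _ => hf0 s)
    (fun s hs => by nlinarith) (fun x hx => ?_) fun b hb => ?_
  · obtain ⟨-, hrx, hxR⟩ := hS.mem_toFinset.1 hx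
    exact ⟨hrx.le, hxR.le⟩
  · rw [integral_const_add_two_mul, ← add_assoc]
    refine le_trans ?_ (hΦ r b hr hb)
    rw [← ncard_coe_finset]
    refine Nat.cast_le.2 (ncard_le_ncard (fun x hx => ?_) (finite_inter_annulus hloc r b))
    obtain ⟨hx, hxb⟩ := Finset.mem_filter.1 hx
    obtain ⟨hxΦ, hrx, -⟩ := hS.mem_toFinset.1 hx
    exact ⟨hxΦ, hrx, hxb⟩

theorem ShotNoiseRingRegulated.ringRegulated
    (hloc : ∀ R : ℝ, (Φ ∩ Metric.closedBall 0 R).Finite) (hΦ : ShotNoiseRingRegulated Φ σ ρ ν) :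
    RingRegulated Φ σ ρ ν := by
  intro r R hr hrR
  set f := (Iio R).indicator (1 : ℝ → ℝ)
  have hS := finite_inter_annulus hloc r R
  have hcard : ∑' x : (Φ ∩ {z : Plane | r < ‖z‖ ∧ ‖z‖ < R} : Set Plane), f ‖(x : Plane)‖
      = (Φ ∩ {z : Plane | r < ‖z‖ ∧ ‖z‖ < R}).ncard := by
    rw [hS.tsum_subtype_eq_sum (fun x => f ‖x‖), ncard_eq_toFinset_card _ hS,
      Finset.card_eq_sum_ones, Nat.cast_sum, Nat.cast_one]
    exact Finset.sum_congr rfl fun x hx => by simp [f, (hS.mem_toFinset.1 hx).2.2]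
  have h := hΦ f (fun _ => indicator_nonneg (fun _ _ => zero_le_one) _)
    ((antitone_indicator_Iio_one R).antitoneOn _)
    ⟨1, by rintro _ ⟨s, -, rfl⟩; exact indicator_le_self' (fun _ _ => zero_le_one) s⟩
    (integrableOn_Ioi_mul_indicator_Iio (hr.trans hrR.le)) r R hr hrR
  have hf1 := setIntegral_Ioc_mul_indicator_Iio hrR.le 1
  have hfid := setIntegral_Ioc_mul_indicator_Iio hrR.le id
  simp only [Pi.one_apply, one_mul, id, integral_id, intervalIntegral.integral_const,
    smul_eq_mul, mul_one] at hf1 hfid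
  rw [hcard, hf1, hfid, show f r = 1 by simp [f, hrR]] at h
  linarith

end Plane

theorem stmt0 (Φ : Set Plane) (σ ρ ν : ℝ)
    (hσ : 0 ≤ σ) (hρ : 0 ≤ ρ) (hν : 0 ≤ ν)
    (hloc : ∀ R : ℝ, (Φ ∩ Metric.closedBall 0 R).Finite) :
    RingRegulated Φ σ ρ ν ↔ ShotNoiseRingRegulated Φ σ ρ ν :=
  ⟨RingRegulated.shotNoiseRingRegulated hσ hρ hν hloc, ShotNoiseRingRegulated.ringRegulated hloc⟩
end
end

section
/- Let Φ be a locally finite set of points in ℝ² that is (σ,ρ,ν)-ring regulated about the origin, and let ℓ be a path-loss function as in the context. Then for every r > r₀, the tail interference satisfies Σ_{w ∈ Φ, ‖w‖ > r} ℓ(‖w‖) ≤ ℓ(r)·(σ + ρ_β r + ν_β r²), where ρ_β = (C/C′)·ρ/(β − 1) and ν_β = (C/C′)·2ν/(β − 2). -/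
open MeasureTheory Set

noncomputable section

/-- The tail interference at the origin from points of `Φ` at distance greater than `r`,
for the path loss `ℓ`. -/
def tailInterference (ℓ : ℝ → ℝ) (Φ : Set Plane) (r : ℝ) : ℝ :=
  ∑' w : {w : Plane // w ∈ Φ ∧ r < ‖w‖}, ℓ ‖(w : Plane)‖

/-!
Since `ℓ` is non-increasing, removing the points beyond `r` one at a time, farthest first
(Abel summation), bounds their total path loss by `σ ℓ(r)` plus a Stieltjes sum of `ℓ` against the
counting majorant `σ + ρ (t - r) + ν (t² - r²)` supplied by ring regularity. On each ring
`a < t ≤ b` the bound `ℓ(b) ≤ C b^(-β)` makes that sum at most the corresponding piece of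
`∫ C t^(-β) d(ρ t + ν t²)`, so the whole sum is at most
`C (ρ r^(1-β) / (β - 1) + 2 ν r^(2-β) / (β - 2))`, which `C' r^(-β) ≤ ℓ(r)` turns into a multiple
of `ℓ(r)`.
-/

open Finset in
theorem sum_add_le_of_card_le {ι : Type*} {d : ι → ℝ} {f g P : ℝ → ℝ} {r : ℝ}
    (hd : ∀ i, r ≤ d i) (hf : AntitoneOn f (Set.Ici r))
    (hcard : ∀ (G : Finset ι) (b : ℝ), r ≤ b → (∀ i ∈ G, d i ≤ b) → (#G : ℝ) ≤ g b)
    (hP : ∀ a b, r ≤ a → a ≤ b → (g b - g a) * f b ≤ P a - P b) (F : Finset ι) :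
    ∀ b, r ≤ b → (∀ i ∈ F, d i ≤ b) →
      ∑ i ∈ F, f (d i) + (g b - #F) * f b + P b ≤ g r * f r + P r := by
  classical
  induction F using Finset.induction_on_max_value d with
  | empty =>
    intro b hrb _
    have hgr : 0 ≤ g r := by simpa using hcard ∅ r le_rfl (by simp)
    have hfb : f b ≤ f r := hf Set.self_mem_Ici hrb hrb
    rw [sum_empty, Finset.card_empty, Nat.cast_zero]
    linarith [hP r b le_rfl hrb, mul_le_mul_of_nonneg_left hfb hgr]
  | insert a s has hmax ih =>
    intro b hrb hb
    have hab : d a ≤ b := hb a (mem_insert_self a s)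
    have hIH := ih (d a) (hd a) hmax
    have hslack : (#s : ℝ) + 1 ≤ g (d a) := by
      have := hcard (insert a s) (d a) (hd a) (by simpa [Finset.forall_mem_insert] using hmax)
      rwa [card_insert_of_notMem has, Nat.cast_succ] at this
    have hfb : f b ≤ f (d a) := hf (hd a) (hd a |>.trans hab) hab
    rw [sum_insert has, card_insert_of_notMem has, Nat.cast_succ]
    linarith [hP (d a) b (hd a) hab, mul_le_mul_of_nonneg_left hfb (sub_nonneg.2 hslack)]

open Finset in
theorem tsum_le_of_card_le {ι : Type*} {d : ι → ℝ} {f g P : ℝ → ℝ} {r : ℝ}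
    (hd : ∀ i, r ≤ d i) (hf0 : ∀ x, r ≤ x → 0 ≤ f x) (hf : AntitoneOn f (Set.Ici r))
    (hcard : ∀ (G : Finset ι) (b : ℝ), r ≤ b → (∀ i ∈ G, d i ≤ b) → (#G : ℝ) ≤ g b)
    (hP : ∀ a b, r ≤ a → a ≤ b → (g b - g a) * f b ≤ P a - P b)
    (hP0 : ∀ b, r ≤ b → 0 ≤ P b) :
    ∑' i, f (d i) ≤ g r * f r + P r := by
  have hsum : ∀ F : Finset ι, ∑ i ∈ F, f (d i) ≤ g r * f r + P r := by
    intro F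
    obtain ⟨M, hM⟩ := (F.image d).exists_le
    set b := max M r
    have hrb : r ≤ b := le_max_right M r
    have hFb : ∀ i ∈ F, d i ≤ b := fun i hi =>
      (hM _ (mem_image_of_mem d hi)).trans (le_max_left M r)
    have hAbel := sum_add_le_of_card_le hd hf hcard hP F b hrb hFb
    linarith [mul_nonneg (sub_nonneg.2 (hcard F b hrb hFb)) (hf0 b hrb), hP0 b hrb]
  exact tsum_le_of_sum_le' (by simpa using hsum ∅) hsum

/-- The right-hand side is `∫ₐᵇ m t^(m-1-β) dt`; the left-hand side is the same integral with
`t^(-β)` replaced by its smallest value `b^(-β)`. -/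
theorem rpow_sub_rpow_mul_rpow_le {a b m β : ℝ} (ha : 0 < a) (hab : a ≤ b) (hm : 0 ≤ m)
    (hmβ : m < β) :
    (b ^ m - a ^ m) * b ^ (-β) ≤ m / (β - m) * (a ^ (m - β) - b ^ (m - β)) := by
  have hb : 0 < b := ha.trans_le hab
  -- both power gaps are compared with `L = log (b / a)` through `1 + x ≤ exp x`
  set L := Real.log b - Real.log a with hLdef
  have ham : a ^ m = b ^ m * Real.exp (-(m * L)) := by
    rw [Real.rpow_def_of_pos ha, Real.rpow_def_of_pos hb, ← Real.exp_add, hLdef]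
    ring_nf
  have hamβ : a ^ (m - β) = b ^ (m - β) * Real.exp ((β - m) * L) := by
    rw [Real.rpow_def_of_pos ha, Real.rpow_def_of_pos hb, ← Real.exp_add, hLdef]
    ring_nf
  have hbm : b ^ m * b ^ (-β) = b ^ (m - β) := by
    rw [← Real.rpow_add hb, sub_eq_add_neg]
  have hlow : b ^ m - a ^ m ≤ b ^ m * (m * L) := by
    rw [ham]
    linarith [mul_le_mul_of_nonneg_left (Real.add_one_le_exp (-(m * L)))
      (Real.rpow_nonneg hb.le m)]
  have hhigh : b ^ (m - β) * ((β - m) * L) ≤ a ^ (m - β) - b ^ (m - β) := by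
    rw [hamβ]
    linarith [mul_le_mul_of_nonneg_left (Real.add_one_le_exp ((β - m) * L))
      (Real.rpow_nonneg hb.le (m - β))]
  rw [div_mul_eq_mul_div, le_div_iff₀ (sub_pos.2 hmβ)]
  calc (b ^ m - a ^ m) * b ^ (-β) * (β - m)
      ≤ b ^ m * (m * L) * b ^ (-β) * (β - m) := by
        gcongr
    _ = m * (b ^ (m - β) * ((β - m) * L)) := by rw [← hbm]; ring
    _ ≤ m * (a ^ (m - β) - b ^ (m - β)) := by gcongr

/-- `∫ₐ^∞ C t^(-β) d(ρ t + ν t²)`, the continuous analogue of the tail interference. -/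
def tailPotential (C ρ ν β a : ℝ) : ℝ :=
  C * (ρ / (β - 1) * a ^ (1 - β) + 2 * ν / (β - 2) * a ^ (2 - β))

section tailPotential

variable {C ρ ν β : ℝ}

theorem tailPotential_nonneg (hC : 0 ≤ C) (hρ : 0 ≤ ρ) (hν : 0 ≤ ν) (hβ : 2 < β) {a : ℝ}
    (ha : 0 < a) : 0 ≤ tailPotential C ρ ν β a := by
  have : 0 < β - 1 := by linarith
  have : 0 < β - 2 := by linarith
  unfold tailPotential
  positivity

theorem mul_le_tailPotential_sub (hC : 0 ≤ C) (hρ : 0 ≤ ρ) (hν : 0 ≤ ν) (hβ : 2 < β)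
    {a b L : ℝ} (ha : 0 < a) (hab : a ≤ b) (hL : L ≤ C * b ^ (-β)) :
    (ρ * (b - a) + ν * (b ^ 2 - a ^ 2)) * L
      ≤ tailPotential C ρ ν β a - tailPotential C ρ ν β b := by
  have hsq : a ^ 2 ≤ b ^ 2 := pow_le_pow_left₀ ha.le hab 2
  have hgap : 0 ≤ ρ * (b - a) + ν * (b ^ 2 - a ^ 2) := by
    have := sub_nonneg.2 hab; have := sub_nonneg.2 hsq; positivity
  calc (ρ * (b - a) + ν * (b ^ 2 - a ^ 2)) * L
      ≤ (ρ * (b - a) + ν * (b ^ 2 - a ^ 2)) * (C * b ^ (-β)) := by gcongr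
    _ = C * (ρ * ((b ^ (1 : ℝ) - a ^ (1 : ℝ)) * b ^ (-β))
          + ν * ((b ^ (2 : ℝ) - a ^ (2 : ℝ)) * b ^ (-β))) := by
        simp only [Real.rpow_one, Real.rpow_two]; ring
    _ ≤ C * (ρ * (1 / (β - 1) * (a ^ (1 - β) - b ^ (1 - β)))
          + ν * (2 / (β - 2) * (a ^ (2 - β) - b ^ (2 - β)))) := by
        gcongr C * (ρ * ?_ + ν * ?_)
        · exact rpow_sub_rpow_mul_rpow_le ha hab zero_le_one (by linarith)
        · exact rpow_sub_rpow_mul_rpow_le ha hab zero_le_two hβ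
    _ = tailPotential C ρ ν β a - tailPotential C ρ ν β b := by unfold tailPotential; ring

theorem tailPotential_le_mul {C' r L : ℝ} (hC' : 0 < C') (hC : 0 ≤ C) (hρ : 0 ≤ ρ)
    (hν : 0 ≤ ν) (hβ : 2 < β) (hr : 0 < r) (hL : C' * r ^ (-β) ≤ L) :
    tailPotential C ρ ν β r
      ≤ L * ((C / C') * (ρ / (β - 1)) * r + (C / C') * (2 * ν / (β - 2)) * r ^ 2) := by
  have : 0 < β - 1 := by linarith
  have : 0 < β - 2 := by linarith
  have h1 : r ^ (1 - β) = r * r ^ (-β) := by rw [sub_eq_add_neg, Real.rpow_add hr, Real.rpow_one]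
  have h2 : r ^ (2 - β) = r ^ 2 * r ^ (-β) := by
    rw [sub_eq_add_neg, Real.rpow_add hr, Real.rpow_two]
  calc tailPotential C ρ ν β r
      = C' * r ^ (-β)
          * ((C / C') * (ρ / (β - 1)) * r + (C / C') * (2 * ν / (β - 2)) * r ^ 2) := by
        rw [tailPotential, h1, h2]
        field_simp
    _ ≤ L * ((C / C') * (ρ / (β - 1)) * r + (C / C') * (2 * ν / (β - 2)) * r ^ 2) := by
        gcongr

end tailPotential

open Filter Topology in
theorem RingRegulated.card_le {Φ : Set Plane} {σ ρ ν : ℝ} (hreg : RingRegulated Φ σ ρ ν)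
    (hloc : ∀ R : ℝ, (Φ ∩ Metric.closedBall 0 R).Finite) {r b : ℝ} (hr : 0 ≤ r) (hrb : r ≤ b)
    (G : Finset Plane) (hG : ↑G ⊆ Φ ∩ {z : Plane | r < ‖z‖ ∧ ‖z‖ ≤ b}) :
    (G.card : ℝ) ≤ σ + ρ * (b - r) + ν * (b ^ 2 - r ^ 2) := by
  -- ring regularity only bounds open rings, so the closed ring `r < ‖z‖ ≤ b` is reached as `R ↓ b`
  have hε : ∀ ε > 0, (G.card : ℝ) ≤ σ + ρ * (b + ε - r) + ν * ((b + ε) ^ 2 - r ^ 2) := by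
    intro ε hε
    set A := Φ ∩ {z : Plane | r < ‖z‖ ∧ ‖z‖ < b + ε}
    have hGA : ↑G ⊆ A := fun z hz =>
      ⟨(hG hz).1, (hG hz).2.1, (hG hz).2.2.trans_lt (lt_add_of_pos_right b hε)⟩
    have hA : A.Finite := (hloc (b + ε)).subset fun z hz =>
      ⟨hz.1, mem_closedBall_zero_iff.2 hz.2.2.le⟩
    calc (G.card : ℝ) = ((G : Set Plane).ncard : ℝ) := by rw [ncard_coe_finset]
      _ ≤ A.ncard := by exact_mod_cast ncard_le_ncard hGA hA
      _ ≤ _ := hreg r (b + ε) hr (by linarith)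
  have hlim : Tendsto (fun ε => σ + ρ * (b + ε - r) + ν * ((b + ε) ^ 2 - r ^ 2)) (𝓝[>] 0)
      (𝓝 (σ + ρ * (b - r) + ν * (b ^ 2 - r ^ 2))) := by
    have hcont : Continuous fun ε : ℝ => σ + ρ * (b + ε - r) + ν * ((b + ε) ^ 2 - r ^ 2) := by
      fun_prop
    simpa only [add_zero] using (hcont.tendsto 0).mono_left nhdsWithin_le_nhds
  exact ge_of_tendsto hlim (eventually_nhdsWithin_of_forall hε)

theorem stmt1_general (Φ : Set Plane) (σ ρ ν : ℝ)
    (hρ : 0 ≤ ρ) (hν : 0 ≤ ν)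
    (hloc : ∀ R : ℝ, (Φ ∩ Metric.closedBall 0 R).Finite)
    (hreg : RingRegulated Φ σ ρ ν)
    (ℓ : ℝ → ℝ) (hℓ0 : ∀ r, 0 ≤ ℓ r)
    (hℓanti : AntitoneOn ℓ (Set.Ici 0))
    (C C' r₀ β : ℝ) (hC' : 0 < C') (hCC' : C' ≤ C) (hr₀ : 0 < r₀) (hβ : 2 < β)
    (hℓlb : ∀ r, r₀ < r → C' * r ^ (-β) ≤ ℓ r)
    (hℓub : ∀ r, r₀ < r → ℓ r ≤ C * r ^ (-β)) :
    ∀ r, r₀ < r →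
      tailInterference ℓ Φ r
        ≤ ℓ r * (σ + (C / C') * (ρ / (β - 1)) * r + (C / C') * (2 * ν / (β - 2)) * r ^ 2) := by
  intro r hr
  have hr0 : 0 < r := hr₀.trans hr
  have hC : 0 ≤ C := hC'.le.trans hCC'
  have hcount : ∀ (G : Finset {w : Plane // w ∈ Φ ∧ r < ‖w‖}) (b : ℝ), r ≤ b →
      (∀ w ∈ G, ‖(w : Plane)‖ ≤ b) → (G.card : ℝ) ≤ σ + ρ * (b - r) + ν * (b ^ 2 - r ^ 2) := by
    intro G b hrb hGb
    simpa using hreg.card_le hloc hr0.le hrb (G.map (Function.Embedding.subtype _))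
      fun z hz => by
        obtain ⟨w, hwG, rfl⟩ := Finset.mem_map.1 hz
        exact ⟨w.2.1, w.2.2, hGb w hwG⟩
  have hring : ∀ a b, r ≤ a → a ≤ b →
      (σ + ρ * (b - r) + ν * (b ^ 2 - r ^ 2) - (σ + ρ * (a - r) + ν * (a ^ 2 - r ^ 2))) * ℓ b
        ≤ tailPotential C ρ ν β a - tailPotential C ρ ν β b := by
    intro a b hra hab
    convert mul_le_tailPotential_sub hC hρ hν hβ (hr0.trans_le hra) hab
      (hℓub b (hr.trans_le (hra.trans hab))) using 1
    ring
  calc tailInterference ℓ Φ r ≤ σ * ℓ r + tailPotential C ρ ν β r := by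
        simpa [tailInterference] using tsum_le_of_card_le (fun w => w.2.2.le) (fun x _ => hℓ0 x)
          (hℓanti.mono (Set.Ici_subset_Ici.2 hr0.le)) hcount hring
          (fun b hrb => tailPotential_nonneg hC hρ hν hβ (hr0.trans_le hrb))
    _ ≤ ℓ r * (σ + (C / C') * (ρ / (β - 1)) * r + (C / C') * (2 * ν / (β - 2)) * r ^ 2) := by
        linarith [tailPotential_le_mul hC' hC hρ hν hβ hr0 (hℓlb r hr)]

theorem stmt1 (Φ : Set Plane) (σ ρ ν : ℝ)
    (hσ : 0 ≤ σ) (hρ : 0 ≤ ρ) (hν : 0 ≤ ν)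
    (hloc : ∀ R : ℝ, (Φ ∩ Metric.closedBall 0 R).Finite)
    (hreg : RingRegulated Φ σ ρ ν)
    (ℓ : ℝ → ℝ) (hℓ0 : ∀ r, 0 ≤ ℓ r)
    (hℓanti : AntitoneOn ℓ (Set.Ici 0))
    (hℓbdd : BddAbove (ℓ '' Set.Ici 0))
    (C C' r₀ β : ℝ) (hC' : 0 < C') (hCC' : C' ≤ C) (hr₀ : 0 < r₀) (hβ : 2 < β)
    (hℓlb : ∀ r, r₀ < r → C' * r ^ (-β) ≤ ℓ r)
    (hℓub : ∀ r, r₀ < r → ℓ r ≤ C * r ^ (-β)) :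
    ∀ r, r₀ < r →
      tailInterference ℓ Φ r
        ≤ ℓ r * (σ + (C / C') * (ρ / (β - 1)) * r + (C / C') * (2 * ν / (β - 2)) * r ^ 2) :=
  stmt1_general Φ σ ρ ν hρ hν hloc hreg ℓ hℓ0 hℓanti C C' r₀ β hC' hCC' hr₀ hβ hℓlb hℓub
end
end

section
/- Let Φ be a locally finite set of points in ℝ² that is (σ,ρ,ν)-ring regulated about the origin, let ℓ be a path-loss function as in the context and γ₀ > 0. Then for every x ∈ ℝ² with ‖x‖ > r₀, SrINR(x, Φ) ≥ η(‖x‖), where η(r) = (γ₀/ℓ(r) + σ_β + ρ_β r + ν_β r²)^{−1}. -/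
/-!
Put `L = ℓ r` with `r = ‖x‖`. Every interferer beyond `r` has path-loss at most `L`, so by the
layer-cake formula the tail interference is `∫₀ᴸ #{w : u < ℓ ‖w‖} du`. As `ℓ t ≤ C t^(-β)`, such
points lie in the annulus `r < ‖w‖ < (C/u)^(1/β)`, whose number of points is bounded by ring
regulation. Integrating this bound and using `C' r^(-β) ≤ L` with Bernoulli's inequality
`(C/C')^(e/β) ≤ 1 + (e/β)(C/C' - 1)` gives `tail ≤ L (σ + ρ_β r + ν_β r²)`, which rearranges to
`η(r) ≤ SrINR`.
-/

open MeasureTheory Set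

noncomputable section

/-- The signal-to-residual-interference-plus-noise ratio of the transmitter at `x`
with respect to the receiver at the origin, under successive interference cancellation. -/
def SrINR (ℓ : ℝ → ℝ) (γ₀ : ℝ) (Φ : Set Plane) (x : Plane) : ℝ :=
  ℓ ‖x‖ / (tailInterference ℓ Φ ‖x‖ + γ₀)

/-- The deterministic lower bound `η(r)` on the SrINR at distance `r`. -/
def eta (ℓ : ℝ → ℝ) (γ₀ σβ ρβ νβ : ℝ) (r : ℝ) : ℝ :=
  (γ₀ / ℓ r + σβ + ρβ * r + νβ * r ^ 2)⁻¹

open scoped Finset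

theorem intervalIntegrable_indicator_Iio_one (a b c : ℝ) :
    IntervalIntegrable ((Set.Iio a).indicator (1 : ℝ → ℝ)) volume b c :=
  (integrableOn_const measure_Icc_lt_top.ne).indicator measurableSet_Iio |>.intervalIntegrable

theorem intervalIntegral_indicator_Iio_one {a L : ℝ} (ha : 0 ≤ a) (haL : a ≤ L) :
    ∫ u in (0 : ℝ)..L, (Set.Iio a).indicator 1 u = a := by
  rw [intervalIntegral.integral_of_le (ha.trans haL), integral_Ioc_eq_integral_Ioo,
    integral_indicator_one measurableSet_Iio, measureReal_restrict_apply measurableSet_Iio,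
    Iio_inter_Ioo, min_eq_left haL, Real.volume_real_Ioo_of_le ha, sub_zero]

theorem Finset.card_filter_lt_eq_sum_indicator {ι : Type*} (F : Finset ι) (f : ι → ℝ) (u : ℝ) :
    (#{i ∈ F | u < f i} : ℝ) = ∑ i ∈ F, (Set.Iio (f i)).indicator 1 u := by
  simp only [Finset.natCast_card_filter, indicator_apply, Set.mem_Iio, Pi.one_apply]

theorem Finset.sum_eq_intervalIntegral_card_filter_lt {ι : Type*} (F : Finset ι) {f : ι → ℝ}
    {L : ℝ} (hf : ∀ i, 0 ≤ f i) (hfL : ∀ i, f i ≤ L) :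
    ∑ i ∈ F, f i = ∫ u in (0 : ℝ)..L, (#{i ∈ F | u < f i} : ℝ) := by
  simp_rw [F.card_filter_lt_eq_sum_indicator]
  rw [intervalIntegral.integral_finsetSum fun i _ ↦ intervalIntegrable_indicator_Iio_one _ _ _]
  exact Finset.sum_congr rfl fun i _ ↦ (intervalIntegral_indicator_Iio_one (hf i) (hfL i)).symm

theorem tsum_le_intervalIntegral_of_ncard_lt_le {ι : Type*} {f : ι → ℝ} {g : ℝ → ℝ} {L : ℝ}
    (hL : 0 ≤ L) (hf : ∀ i, 0 ≤ f i) (hfL : ∀ i, f i ≤ L) (hg : IntervalIntegrable g volume 0 L)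
    (hcard : ∀ u ∈ Ioo 0 L, {i | u < f i}.Finite ∧ ({i | u < f i}.ncard : ℝ) ≤ g u) :
    ∑' i, f i ≤ ∫ u in (0 : ℝ)..L, g u := by
  refine Real.tsum_le_of_sum_le hf fun F ↦ ?_
  rw [F.sum_eq_intervalIntegral_card_filter_lt hf hfL]
  have hint : IntervalIntegrable (fun u ↦ (#{i ∈ F | u < f i} : ℝ)) volume 0 L := by
    simp_rw [F.card_filter_lt_eq_sum_indicator]
    simpa only [Finset.sum_fn] using IntervalIntegrable.sum F
      (f := fun i ↦ (Set.Iio (f i)).indicator 1)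
      fun i _ ↦ intervalIntegrable_indicator_Iio_one _ _ _
  refine intervalIntegral.integral_mono_on_of_le_Ioo hL hint hg fun u hu ↦ ?_
  calc (#{i ∈ F | u < f i} : ℝ) ≤ {i | u < f i}.ncard := by
        rw [← ncard_coe_finset]
        exact_mod_cast ncard_le_ncard (fun i hi ↦ (Finset.mem_filter.1 hi).2) (hcard u hu).1
    _ ≤ g u := (hcard u hu).2

theorem div_rpow_eq_mul_rpow_neg {C u : ℝ} (hC : 0 ≤ C) (hu : 0 ≤ u) (a : ℝ) :
    (C / u) ^ a = C ^ a * u ^ (-a) := by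
  rw [Real.div_rpow hC hu, Real.rpow_neg hu, div_eq_mul_inv]

theorem intervalIntegrable_div_rpow {C L a : ℝ} (hC : 0 ≤ C) (hL : 0 ≤ L) (ha : a < 1) :
    IntervalIntegrable (fun u ↦ (C / u) ^ a) volume 0 L := by
  refine (intervalIntegrable_congr fun u hu ↦ ?_).2
    ((intervalIntegral.intervalIntegrable_rpow' (r := -a) (by linarith)).const_mul (C ^ a))
  rw [uIoc_of_le hL] at hu
  exact div_rpow_eq_mul_rpow_neg hC hu.1.le a

theorem integral_div_rpow {C L a : ℝ} (hC : 0 ≤ C) (hL : 0 < L) (ha : a < 1) :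
    ∫ u in (0 : ℝ)..L, (C / u) ^ a = L * (C / L) ^ a / (1 - a) := by
  have hcongr : EqOn (fun u ↦ (C / u) ^ a) (fun u ↦ C ^ a * u ^ (-a)) (uIcc 0 L) := by
    intro u hu
    rw [uIcc_of_le hL.le] at hu
    exact div_rpow_eq_mul_rpow_neg hC hu.1 a
  rw [intervalIntegral.integral_congr hcongr, intervalIntegral.integral_const_mul,
    integral_rpow (Or.inl (by linarith)), Real.zero_rpow (by linarith),
    div_rpow_eq_mul_rpow_neg hC hL.le, Real.rpow_add hL, Real.rpow_one]
  ring_nf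

theorem lt_div_rpow_of_lt_mul_rpow_neg {C β t u : ℝ} (hC : 0 ≤ C) (hβ : 0 < β) (ht : 0 < t)
    (hu : 0 < u) (h : u < C * t ^ (-β)) : t < (C / u) ^ (1 / β) := by
  rw [one_div, Real.lt_rpow_inv_iff_of_pos ht.le (div_nonneg hC hu.le) hβ, lt_div_iff₀ hu]
  have htβ : 0 < t ^ β := Real.rpow_pos_of_pos ht β
  calc t ^ β * u < t ^ β * (C * t ^ (-β)) := by gcongr
    _ = C := by rw [Real.rpow_neg ht.le]; field_simp

theorem integral_div_rpow_sub_le {C C' β e r L : ℝ} (hC' : 0 < C') (hCC' : C' ≤ C) (he : 0 < e)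
    (heβ : e < β) (hr : 0 < r) (hL : C' * r ^ (-β) ≤ L) :
    (∫ u in (0 : ℝ)..L, (C / u) ^ (e / β)) - r ^ e * L ≤ C / C' * (e / (β - e)) * r ^ e * L := by
  have hβ : 0 < β := he.trans heβ
  have hβe : 0 < β - e := by linarith
  have hC : 0 < C := hC'.trans_le hCC'
  have hL0 : 0 < L := lt_of_lt_of_le (by positivity) hL
  have ha1 : e / β < 1 := (div_lt_one hβ).2 heβ
  have h1a : 0 < 1 - e / β := by linarith
  have hq : 1 ≤ C / C' := (one_le_div hC').2 hCC'
  have hCL : C / L ≤ C / C' * r ^ β := by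
    rw [div_le_iff₀ hL0]
    calc C = C / C' * r ^ β * (C' * r ^ (-β)) := by
          rw [Real.rpow_neg hr.le]; field_simp
      _ ≤ C / C' * r ^ β * L := by gcongr
  have hpow : (C / L) ^ (e / β) ≤ (C / C') ^ (e / β) * r ^ e := by
    calc (C / L) ^ (e / β) ≤ (C / C' * r ^ β) ^ (e / β) := by gcongr
      _ = (C / C') ^ (e / β) * r ^ e := by
        rw [Real.mul_rpow (by positivity) (by positivity), ← Real.rpow_mul hr.le,
          mul_div_cancel₀ e hβ.ne']
  have hbern : (C / C') ^ (e / β) ≤ 1 + e / β * (C / C' - 1) := by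
    simpa using rpow_one_add_le_one_add_mul_self (s := C / C' - 1) (by linarith) (by positivity)
      ha1.le
  rw [integral_div_rpow hC.le hL0 ha1]
  calc L * (C / L) ^ (e / β) / (1 - e / β) - r ^ e * L
      ≤ L * ((1 + e / β * (C / C' - 1)) * r ^ e) / (1 - e / β) - r ^ e * L := by
        gcongr
        exact hpow.trans (by gcongr)
    _ = C / C' * (e / (β - e)) * r ^ e * L := by
        field_simp
        ring

/-- The ring-regulation bound for the annulus `r < ‖z‖ < (C/u)^(1/β)`, which contains every
point beyond `r` whose path-loss exceeds `u`. -/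
def ringCountBound (σ ρ ν C β r u : ℝ) : ℝ :=
  σ + ρ * ((C / u) ^ (1 / β) - r) + ν * ((C / u) ^ (2 / β) - r ^ 2)

theorem ringCountBound_eq (σ ρ ν C β r : ℝ) :
    ringCountBound σ ρ ν C β r
      = fun u ↦ (σ - ρ * r - ν * r ^ 2) + ρ * (C / u) ^ (1 / β) + ν * (C / u) ^ (2 / β) := by
  funext u; rw [ringCountBound]; ring

theorem intervalIntegrable_ringCountBound {σ ρ ν C β r L : ℝ} (hC : 0 ≤ C) (hβ : 2 < β)
    (hL : 0 ≤ L) : IntervalIntegrable (ringCountBound σ ρ ν C β r) volume 0 L := by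
  rw [ringCountBound_eq]
  exact (intervalIntegrable_const.add ((intervalIntegrable_div_rpow hC hL
    ((div_lt_one (by linarith)).2 (by linarith))).const_mul ρ)).add
    ((intervalIntegrable_div_rpow hC hL ((div_lt_one (by linarith)).2 hβ)).const_mul ν)

theorem integral_ringCountBound_le {σ ρ ν C C' β r L : ℝ} (hρ : 0 ≤ ρ) (hν : 0 ≤ ν)
    (hC' : 0 < C') (hCC' : C' ≤ C) (hβ : 2 < β) (hr : 0 < r) (hL : C' * r ^ (-β) ≤ L) :
    ∫ u in (0 : ℝ)..L, ringCountBound σ ρ ν C β r u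
      ≤ L * (σ + C / C' * (ρ / (β - 1)) * r + C / C' * (2 * ν / (β - 2)) * r ^ 2) := by
  have hC : 0 ≤ C := hC'.le.trans hCC'
  have hL0 : 0 ≤ L := le_trans (by positivity) hL
  have i1 := (intervalIntegrable_div_rpow hC hL0
    ((div_lt_one (by linarith)).2 (by linarith : (1 : ℝ) < β))).const_mul ρ
  have i2 := (intervalIntegrable_div_rpow hC hL0 ((div_lt_one (by linarith)).2 hβ)).const_mul ν
  rw [ringCountBound_eq, intervalIntegral.integral_add (intervalIntegrable_const.add i1) i2,
    intervalIntegral.integral_add intervalIntegrable_const i1, intervalIntegral.integral_const,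
    intervalIntegral.integral_const_mul, intervalIntegral.integral_const_mul, smul_eq_mul,
    sub_zero]
  have p1 := integral_div_rpow_sub_le hC' hCC' one_pos (by linarith) hr hL
  have p2 := integral_div_rpow_sub_le hC' hCC' two_pos hβ hr hL
  rw [Real.rpow_one] at p1
  rw [Real.rpow_two] at p2
  linear_combination ρ * p1 + ν * p2

theorem ncard_lt_le_ringCountBound {Φ : Set Plane} {σ ρ ν : ℝ} {ℓ : ℝ → ℝ} {C β r u : ℝ}
    (hloc : ∀ R : ℝ, (Φ ∩ Metric.closedBall 0 R).Finite) (hreg : RingRegulated Φ σ ρ ν)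
    (hC : 0 ≤ C) (hβ : 0 < β) (hr : 0 < r) (hℓub : ∀ t, r ≤ t → ℓ t ≤ C * t ^ (-β))
    (hu : 0 < u) (hur : u < ℓ r) :
    {w : {w : Plane // w ∈ Φ ∧ r < ‖w‖} | u < ℓ ‖(w : Plane)‖}.Finite ∧
      ({w : {w : Plane // w ∈ Φ ∧ r < ‖w‖} | u < ℓ ‖(w : Plane)‖}.ncard : ℝ)
        ≤ ringCountBound σ ρ ν C β r u := by
  set s := (C / u) ^ (1 / β)
  have hlt (t : ℝ) (ht : r ≤ t) (hut : u < ℓ t) : t < s :=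
    lt_div_rpow_of_lt_mul_rpow_neg hC hβ (hr.trans_le ht) hu (hut.trans_le (hℓub t ht))
  set B := Φ ∩ {z : Plane | r < ‖z‖ ∧ ‖z‖ < s}
  have hsub : Subtype.val '' {w : {w : Plane // w ∈ Φ ∧ r < ‖w‖} | u < ℓ ‖(w : Plane)‖} ⊆ B := by
    rintro _ ⟨w, hw, rfl⟩
    exact ⟨w.2.1, w.2.2, hlt _ w.2.2.le hw⟩
  have hB : B.Finite :=
    (hloc s).subset fun z hz ↦ ⟨hz.1, mem_closedBall_zero_iff.2 hz.2.2.le⟩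
  have hs2 : s ^ 2 = (C / u) ^ (2 / β) := by
    rw [← Real.rpow_natCast, ← Real.rpow_mul (by positivity)]
    congr 1
    push_cast
    ring
  refine ⟨Finite.of_finite_image (hB.subset hsub) Subtype.val_injective.injOn, ?_⟩
  rw [← ncard_image_of_injective _ Subtype.val_injective]
  calc _ ≤ (B.ncard : ℝ) := by exact_mod_cast ncard_le_ncard hsub hB
    _ ≤ σ + ρ * (s - r) + ν * (s ^ 2 - r ^ 2) := hreg r s hr.le (hlt r le_rfl hur)
    _ = ringCountBound σ ρ ν C β r u := by rw [hs2, ringCountBound]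

theorem tailInterference_le {Φ : Set Plane} {σ ρ ν : ℝ} {ℓ : ℝ → ℝ} {C C' β r : ℝ}
    (hloc : ∀ R : ℝ, (Φ ∩ Metric.closedBall 0 R).Finite) (hreg : RingRegulated Φ σ ρ ν)
    (hρ : 0 ≤ ρ) (hν : 0 ≤ ν) (hℓ0 : ∀ t, 0 ≤ ℓ t) (hℓanti : AntitoneOn ℓ (Ici 0))
    (hC' : 0 < C') (hCC' : C' ≤ C) (hβ : 2 < β) (hr : 0 < r)
    (hℓr : C' * r ^ (-β) ≤ ℓ r) (hℓub : ∀ t, r ≤ t → ℓ t ≤ C * t ^ (-β)) :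
    tailInterference ℓ Φ r
      ≤ ℓ r * (σ + C / C' * (ρ / (β - 1)) * r + C / C' * (2 * ν / (β - 2)) * r ^ 2) := by
  have hC : 0 ≤ C := hC'.le.trans hCC'
  have hL : 0 < ℓ r := lt_of_lt_of_le (by positivity) hℓr
  refine (tsum_le_intervalIntegral_of_ncard_lt_le hL.le (fun w ↦ hℓ0 _) (fun w ↦ ?_)
    (intervalIntegrable_ringCountBound hC hβ hL.le) fun u hu ↦ ?_).trans
    (integral_ringCountBound_le hρ hν hC' hCC' hβ hr hℓr)
  · exact hℓanti (mem_Ici.2 hr.le) (mem_Ici.2 (hr.le.trans w.2.2.le)) w.2.2.le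
  · exact ncard_lt_le_ringCountBound hloc hreg hC (by linarith) hr hℓub hu.1 hu.2

theorem inv_div_add_le_div_add {L T S γ : ℝ} (hL : 0 < L) (hT : 0 ≤ T) (hγ : 0 < γ)
    (h : T ≤ L * S) : (γ / L + S)⁻¹ ≤ L / (T + γ) := by
  have hS : 0 ≤ S := nonneg_of_mul_nonneg_right (hT.trans h) hL
  calc (γ / L + S)⁻¹ = L / (γ + L * S) := by field_simp
    _ ≤ L / (T + γ) := div_le_div_of_nonneg_left hL.le (by positivity) (by linarith)

theorem stmt2_general (Φ : Set Plane) (σ ρ ν : ℝ)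
    (hρ : 0 ≤ ρ) (hν : 0 ≤ ν)
    (hloc : ∀ R : ℝ, (Φ ∩ Metric.closedBall 0 R).Finite)
    (hreg : RingRegulated Φ σ ρ ν)
    (ℓ : ℝ → ℝ) (hℓ0 : ∀ r, 0 ≤ ℓ r)
    (hℓanti : AntitoneOn ℓ (Set.Ici 0))
    (C C' r₀ β : ℝ) (hC' : 0 < C') (hCC' : C' ≤ C) (hr₀ : 0 < r₀) (hβ : 2 < β)
    (hℓlb : ∀ r, r₀ < r → C' * r ^ (-β) ≤ ℓ r)
    (hℓub : ∀ r, r₀ < r → ℓ r ≤ C * r ^ (-β))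
    (γ₀ : ℝ) (hγ₀ : 0 < γ₀) :
    ∀ x : Plane, r₀ < ‖x‖ →
      eta ℓ γ₀ σ ((C / C') * (ρ / (β - 1))) ((C / C') * (2 * ν / (β - 2))) ‖x‖
        ≤ SrINR ℓ γ₀ Φ x := by
  intro x hx
  have hr : 0 < ‖x‖ := hr₀.trans hx
  have hℓx := hℓlb _ hx
  have hT := tailInterference_le hloc hreg hρ hν hℓ0 hℓanti hC' hCC' hβ hr hℓx
    fun t ht ↦ hℓub t (hx.trans_le ht)
  have hbound := inv_div_add_le_div_add (T := tailInterference ℓ Φ ‖x‖)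
    ((mul_pos hC' (Real.rpow_pos_of_pos hr _)).trans_le hℓx) (tsum_nonneg fun _ ↦ hℓ0 _) hγ₀ hT
  simpa only [eta, SrINR, add_assoc] using hbound

theorem stmt2 (Φ : Set Plane) (σ ρ ν : ℝ)
    (hσ : 0 ≤ σ) (hρ : 0 ≤ ρ) (hν : 0 ≤ ν)
    (hloc : ∀ R : ℝ, (Φ ∩ Metric.closedBall 0 R).Finite)
    (hreg : RingRegulated Φ σ ρ ν)
    (ℓ : ℝ → ℝ) (hℓ0 : ∀ r, 0 ≤ ℓ r)
    (hℓanti : AntitoneOn ℓ (Set.Ici 0))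
    (hℓbdd : BddAbove (ℓ '' Set.Ici 0))
    (C C' r₀ β : ℝ) (hC' : 0 < C') (hCC' : C' ≤ C) (hr₀ : 0 < r₀) (hβ : 2 < β)
    (hℓlb : ∀ r, r₀ < r → C' * r ^ (-β) ≤ ℓ r)
    (hℓub : ∀ r, r₀ < r → ℓ r ≤ C * r ^ (-β))
    (γ₀ : ℝ) (hγ₀ : 0 < γ₀) :
    ∀ x : Plane, r₀ < ‖x‖ →
      eta ℓ γ₀ σ ((C / C') * (ρ / (β - 1))) ((C / C') * (2 * ν / (β - 2))) ‖x‖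
        ≤ SrINR ℓ γ₀ Φ x :=
  stmt2_general Φ σ ρ ν hρ hν hloc hreg ℓ hℓ0 hℓanti C C' r₀ β hC' hCC' hr₀ hβ hℓlb hℓub γ₀ hγ₀
end
end

section
/- Let R be a nonnegative random variable on a probability space, let m > 0, let T be a positive integer, and let θ > 0 and ζ > 0 be such that 𝔼[exp(−t θ R)] ≤ exp(−t ζ) for every integer t with 1 ≤ t ≤ T. Then the probability that the virtual decoding delay exceeds T satisfies P(T · R < m) ≤ exp(m θ − T ζ) / (1 − exp(−ζ)). -/
/-!
A Chernoff bound at the exponent `θ`: applied to the nonnegative variable `T R`, Markov's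
inequality for `exp (-θ T R)` gives `P(T R < m) ≤ exp (θ m) 𝔼[exp (-T θ R)] ≤ exp (m θ - T ζ)`,
and dividing by `1 - exp (-ζ) ∈ (0, 1)` only enlarges the bound.
-/

open MeasureTheory ProbabilityTheory Real

noncomputable section

namespace ProbabilityTheory

variable {Ω : Type*} [MeasurableSpace Ω] {μ : Measure Ω} [IsFiniteMeasure μ] {X : Ω → ℝ}

lemma integrable_exp_neg_mul_of_nonneg (hX : AEMeasurable X μ) (hX0 : ∀ᵐ ω ∂μ, 0 ≤ X ω)
    {s : ℝ} (hs : 0 ≤ s) : Integrable (fun ω ↦ exp (-s * X ω)) μ := by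
  refine .of_mem_Icc 0 1 (measurable_exp.comp_aemeasurable (hX.const_mul _)) ?_
  filter_upwards [hX0] with ω hω
  exact ⟨(exp_pos _).le, exp_le_one_iff.mpr (by nlinarith)⟩

lemma measureReal_lt_le_exp_mul_integral_exp_neg (hX : AEMeasurable X μ)
    (hX0 : ∀ᵐ ω ∂μ, 0 ≤ X ω) {s : ℝ} (hs : 0 ≤ s) (a : ℝ) :
    μ.real {ω | X ω < a} ≤ exp (s * a) * ∫ ω, exp (-s * X ω) ∂μ :=
  calc μ.real {ω | X ω < a}
      ≤ μ.real {ω | X ω ≤ a} := measureReal_mono fun _ (hω : X _ < a) ↦ hω.le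
    _ ≤ exp (-(-s) * a) * mgf X μ (-s) :=
        measure_le_le_exp_mul_mgf a (neg_nonpos.mpr hs)
          (integrable_exp_neg_mul_of_nonneg hX hX0 hs)
    _ = exp (s * a) * ∫ ω, exp (-s * X ω) ∂μ := by rw [neg_neg, mgf]

end ProbabilityTheory

theorem stmt8_general {Ω : Type*} [MeasurableSpace Ω] (P : Measure Ω) [IsProbabilityMeasure P]
    (R : Ω → ℝ) (hRmeas : Measurable R) (hR0 : ∀ ω, 0 ≤ R ω)
    (m : ℝ) (T : ℕ) (hT : 0 < T)
    (θ ζ : ℝ) (hθ : 0 < θ) (hζ : 0 < ζ)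
    (hmgf : ∀ t : ℕ, 1 ≤ t → t ≤ T →
      ∫ ω, Real.exp (-(t : ℝ) * θ * R ω) ∂P ≤ Real.exp (-(t : ℝ) * ζ)) :
    (P {ω | (T : ℝ) * R ω < m}).toReal
      ≤ Real.exp (m * θ - (T : ℝ) * ζ) / (1 - Real.exp (-ζ)) := by
  have hTR0 : ∀ᵐ ω ∂P, 0 ≤ (T : ℝ) * R ω :=
    .of_forall fun ω ↦ mul_nonneg T.cast_nonneg (hR0 ω)
  have hden_pos : 0 < 1 - exp (-ζ) := sub_pos.mpr (exp_lt_one_iff.mpr (neg_neg_of_pos hζ))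
  calc P.real {ω | (T : ℝ) * R ω < m}
      ≤ exp (θ * m) * ∫ ω, exp (-θ * ((T : ℝ) * R ω)) ∂P :=
        measureReal_lt_le_exp_mul_integral_exp_neg
          (hRmeas.const_mul _).aemeasurable hTR0 hθ.le m
    _ = exp (θ * m) * ∫ ω, exp (-(T : ℝ) * θ * R ω) ∂P := by
        congr 2 with ω
        ring_nf
    _ ≤ exp (θ * m) * exp (-(T : ℝ) * ζ) := by gcongr; exact hmgf T hT le_rfl
    _ = exp (m * θ - (T : ℝ) * ζ) := by rw [← exp_add]; ring_nf
    _ ≤ exp (m * θ - (T : ℝ) * ζ) / (1 - exp (-ζ)) :=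
        le_div_self (exp_pos _).le hden_pos (sub_le_self _ (exp_pos _).le)

theorem stmt8 {Ω : Type*} [MeasurableSpace Ω] (P : Measure Ω) [IsProbabilityMeasure P]
    (R : Ω → ℝ) (hRmeas : Measurable R) (hR0 : ∀ ω, 0 ≤ R ω)
    (m : ℝ) (hm : 0 < m) (T : ℕ) (hT : 0 < T)
    (θ ζ : ℝ) (hθ : 0 < θ) (hζ : 0 < ζ)
    (hmgf : ∀ t : ℕ, 1 ≤ t → t ≤ T →
      ∫ ω, Real.exp (-(t : ℝ) * θ * R ω) ∂P ≤ Real.exp (-(t : ℝ) * ζ)) :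
    (P {ω | (T : ℝ) * R ω < m}).toReal
      ≤ Real.exp (m * θ - (T : ℝ) * ζ) / (1 - Real.exp (-ζ)) :=
  stmt8_general P R hRmeas hR0 m T hT θ ζ hθ hζ hmgf
end
end

section
/- Let S be a nonnegative random variable on a probability space, and let p, N₀, s > 0 and K ∈ ℝ be such that for every t with 0 < t < p/N₀, P(S ≤ t) ≤ exp( K − s (p/t − N₀) ). Then for every θ > 0, 𝔼[ exp( −θ log₂(1 + S) ) ] ≤ (1 + p/N₀)^{−θ/ln 2} + exp(K + s N₀) · ∫_{(1 + p/N₀)^{−θ/ln 2}}^{1} exp( −s p t^{(ln 2)/θ} ) dt. -/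
/-!
Put `X = (1 + S) ^ (-θ / ln 2) = exp (-θ log₂ (1 + S))`, which takes values in `[0, 1]`, and
`a = (1 + p / N₀) ^ (-θ / ln 2)`. By the layer-cake formula `𝔼 X = ∫₀¹ P(t ≤ X) dt`, and the part
of the integral over `[0, a]` is at most `a`. For `a < t < 1` the event `t ≤ X` is
`S ≤ v⁻¹ - 1` with `v = t ^ (ln 2 / θ) ∈ (0, 1)` and `0 < v⁻¹ - 1 < p / N₀`, so the tail hypothesis
applies; finally `p / (v⁻¹ - 1) = p v / (1 - v) ≥ p v`.
-/

open MeasureTheory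

namespace Real

theorem exp_neg_mul_logb {b y : ℝ} (θ : ℝ) (hy : 0 < y) :
    exp (-θ * logb b y) = y ^ (-(θ / log b)) := by
  rw [rpow_def_of_pos hy, logb]
  ring_nf

theorem exp_sub_mul_div_inv_sub_one_le {p s v : ℝ} (K N₀ : ℝ) (hp : 0 ≤ p) (hs : 0 ≤ s)
    (hv0 : 0 < v) (hv1 : v < 1) :
    exp (K - s * (p / (v⁻¹ - 1) - N₀)) ≤ exp (K + s * N₀) * exp (-(s * p * v)) := by
  have hkey : p * v ≤ p / (v⁻¹ - 1) := by
    have hu : 0 < v⁻¹ - 1 := sub_pos.2 ((one_lt_inv₀ hv0).2 hv1)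
    rw [le_div_iff₀ hu, mul_sub, mul_one, mul_inv_cancel_right₀ hv0.ne']
    nlinarith
  rw [← exp_add, exp_le_exp]
  nlinarith [mul_le_mul_of_nonneg_left hkey hs]

end Real

namespace MeasureTheory

variable {Ω : Type*} [MeasurableSpace Ω]

theorem measureReal_setOf_le_one_add_rpow (μ : Measure Ω) {S : Ω → ℝ} (hS0 : ∀ ω, 0 ≤ S ω)
    {z t : ℝ} (hz : z < 0) (ht : 0 < t) :
    μ.real {ω | t ≤ (1 + S ω) ^ z} = μ.real {ω | S ω ≤ t ^ z⁻¹ - 1} := by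
  congr 1
  refine Set.ext fun ω ↦ ?_
  have h1S : 0 < 1 + S ω := by linarith [hS0 ω]
  exact (Real.le_rpow_inv_iff_of_neg h1S ht hz).symm.trans le_sub_iff_add_le'.symm

theorem integral_le_add_intervalIntegral_of_measureReal_le {μ : Measure Ω}
    [IsProbabilityMeasure μ] {X : Ω → ℝ} (hX : AEMeasurable X μ) (hX0 : 0 ≤ᵐ[μ] X)
    (hX1 : X ≤ᵐ[μ] fun _ ↦ 1)
    {a : ℝ} (ha0 : 0 ≤ a) (ha1 : a ≤ 1) {g : ℝ → ℝ} (hg : IntervalIntegrable g volume a 1)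
    (htail : ∀ t ∈ Set.Ioo a 1, μ.real {ω | t ≤ X ω} ≤ g t) :
    ∫ ω, X ω ∂μ ≤ a + ∫ t in a..1, g t := by
  set G : ℝ → ℝ := fun t ↦ μ.real {ω | t ≤ X ω}
  have hG : Antitone G := fun t₁ t₂ h ↦
    measureReal_mono fun ω (hω : t₂ ≤ X ω) ↦ h.trans hω
  have hXint : Integrable X μ :=
    (integrable_const (1 : ℝ)).mono' hX.aestronglyMeasurable <| by
      filter_upwards [hX0, hX1] with ω h0 h1
      rwa [Real.norm_eq_abs, abs_of_nonneg h0]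
  have hG_head : ∫ t in (0 : ℝ)..a, G t ≤ a := by
    calc ∫ t in (0 : ℝ)..a, G t ≤ ∫ t in (0 : ℝ)..a, (1 : ℝ) :=
          intervalIntegral.integral_mono_on ha0 hG.intervalIntegrable intervalIntegrable_const
            fun t _ ↦ measureReal_le_one
      _ = a := by simp
  calc ∫ ω, X ω ∂μ = ∫ t in (0 : ℝ)..1, G t := by
        rw [hXint.integral_eq_integral_Ioc_meas_le hX0 hX1,
          intervalIntegral.integral_of_le zero_le_one]
    _ = (∫ t in (0 : ℝ)..a, G t) + ∫ t in a..1, G t :=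
        (intervalIntegral.integral_add_adjacent_intervals hG.intervalIntegrable
          hG.intervalIntegrable).symm
    _ ≤ a + ∫ t in a..1, g t :=
        add_le_add hG_head
          (intervalIntegral.integral_mono_on_of_le_Ioo ha1 hG.intervalIntegrable hg htail)

end MeasureTheory

theorem stmt14 {Ω : Type*} [MeasurableSpace Ω] (P : Measure Ω) [IsProbabilityMeasure P]
    (S : Ω → ℝ) (hSmeas : Measurable S) (hS0 : ∀ ω, 0 ≤ S ω)
    (p N₀ s K : ℝ) (hp : 0 < p) (hN₀ : 0 < N₀) (hs : 0 < s)
    (htail : ∀ t : ℝ, 0 < t → t < p / N₀ →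
      (P {ω | S ω ≤ t}).toReal ≤ Real.exp (K - s * (p / t - N₀)))
    (θ : ℝ) (hθ : 0 < θ) :
    ∫ ω, Real.exp (-θ * Real.logb 2 (1 + S ω)) ∂P
      ≤ (1 + p / N₀) ^ (-(θ / Real.log 2))
        + Real.exp (K + s * N₀) *
            ∫ t in ((1 + p / N₀) ^ (-(θ / Real.log 2)))..1,
              Real.exp (-(s * p * t ^ (Real.log 2 / θ))) := by
  have hlog2 : 0 < Real.log 2 := Real.log_pos one_lt_two
  have hc : 0 < Real.log 2 / θ := div_pos hlog2 hθ
  set z : ℝ := -(θ / Real.log 2)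
  have hz : z < 0 := neg_lt_zero.2 (div_pos hθ hlog2)
  have hz_inv : z⁻¹ = -(Real.log 2 / θ) := by rw [inv_neg, inv_div]
  set b : ℝ := 1 + p / N₀
  have hb : 1 < b := lt_add_of_pos_right 1 (div_pos hp hN₀)
  have h1S : ∀ ω, 1 ≤ 1 + S ω := fun ω ↦ le_add_of_nonneg_right (hS0 ω)
  simp_rw [Real.exp_neg_mul_logb θ (zero_lt_one.trans_le (h1S _))]
  rw [← intervalIntegral.integral_const_mul]
  have hg : Continuous fun t : ℝ ↦
      Real.exp (K + s * N₀) * Real.exp (-(s * p * t ^ (Real.log 2 / θ))) := by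
    fun_prop (disch := exact hc.le)
  refine integral_le_add_intervalIntegral_of_measureReal_le
    (by fun_prop : Measurable fun ω ↦ (1 + S ω) ^ z).aemeasurable
    (ae_of_all _ fun ω ↦ Real.rpow_nonneg (zero_le_one.trans (h1S ω)) z)
    (ae_of_all _ fun ω ↦ Real.rpow_le_one_of_one_le_of_nonpos (h1S ω) hz.le)
    (Real.rpow_nonneg (zero_le_one.trans hb.le) z)
    (Real.rpow_le_one_of_one_le_of_nonpos hb.le hz.le)
    (hg.intervalIntegrable _ _) fun t ht ↦ ?_
  have ht0 : 0 < t := (Real.rpow_pos_of_pos (zero_lt_one.trans hb) z).trans ht.1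
  have hv0 : 0 < t ^ (Real.log 2 / θ) := Real.rpow_pos_of_pos ht0 _
  have hv1 : t ^ (Real.log 2 / θ) < 1 := Real.rpow_lt_one ht0.le ht.2 hc
  have hu : t ^ z⁻¹ = (t ^ (Real.log 2 / θ))⁻¹ := by rw [hz_inv, Real.rpow_neg ht0.le]
  have hub : t ^ z⁻¹ < b := (Real.rpow_inv_lt_iff_of_neg ht0 (zero_lt_one.trans hb) hz).2 ht.1
  rw [measureReal_setOf_le_one_add_rpow P hS0 hz ht0, hu]
  rw [hu] at hub
  refine (htail _ (sub_pos.2 ((one_lt_inv₀ hv0).2 hv1)) (by linarith)).trans ?_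
  exact Real.exp_sub_mul_div_inv_sub_one_le K N₀ hp.le hs.le hv0 hv1
end
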